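/- arXiv:2003.02234 — 3 statements merged into one kernel-verified Lean document; each statement's English description precedes it below -/
import Mathlib

section
/- In the single-topic model (w ∈ {e₁,…,e_K}), suppose landmark documents l₁,…,l_M are chosen so that the K×M matrix L with columns ψ(l_j)/P(x⁽²⁾=l_j) has rank K, where ψ(l)_k = P(x⁽²⁾=l | w=e_k). Then for every document x, L^† (L^⊤ η(x)) = η(x), where η(x)_k = P(w=e_k | x⁽¹⁾=x) and L^† is the Moore–Penrose pseudo-inverse; i.e., the posterior topic distribution is exactly recoverable by a fixed linear map applied to the oracle representation g*(x, l_{1:M}) = L^⊤ η(x). -/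
open Finset Matrix
open scoped Classical

/-!
Conditional independence of the two halves given the topic makes the oracle representation
`g*(x, l_{1:M})` equal to `Lᵀ η(x)`. When `L` has rank `K`, `L Lᵀ` is invertible, so
`(L Lᵀ)⁻¹ L` is a left inverse of `Lᵀ` and recovers `η(x)`.
-/

/-- Probability of an event under a finite probability space with density `p`. -/
noncomputable def pr {Ω : Type*} [Fintype Ω] (p : Ω → ℝ) (s : Ω → Prop) : ℝ :=
  ∑ ω, if s ω then p ω else 0

/-- For `L` of full row rank, `(L * Lᵀ)⁻¹ * L` is the Moore–Penrose pseudo-inverse of `Lᵀ`. -/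
noncomputable def pinvT {K M : ℕ} (L : Matrix (Fin K) (Fin M) ℝ) : Matrix (Fin K) (Fin M) ℝ :=
  (L * Lᵀ)⁻¹ * L

theorem Matrix.isUnit_of_rank_eq_card {n R : Type*} [Fintype n] [DecidableEq n] [Field R]
    (A : Matrix n n R) (h : A.rank = Fintype.card n) : IsUnit A := by
  rw [← mulVec_surjective_iff_isUnit]
  refine (LinearMap.range_eq_top (f := A.mulVecLin)).mp (Submodule.eq_top_of_finrank_eq ?_)
  rw [← Matrix.rank, h, Module.finrank_fintype_fun_eq_card]

theorem pinvT_mul_transpose {K M : ℕ} {L : Matrix (Fin K) (Fin M) ℝ} (hL : L.rank = K) :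
    pinvT L * Lᵀ = 1 := by
  have hunit : IsUnit (L * Lᵀ) :=
    (L * Lᵀ).isUnit_of_rank_eq_card (by rw [rank_self_mul_transpose, hL, Fintype.card_fin])
  rw [pinvT, Matrix.mul_assoc, nonsing_inv_mul _ ((isUnit_iff_isUnit_det _).mp hunit)]

section Probability

variable {Ω : Type*} [Fintype Ω] (p : Ω → ℝ)

theorem pr_congr {s t : Ω → Prop} (h : ∀ ω, s ω ↔ t ω) : pr p s = pr p t := by
  rw [funext fun ω => propext (h ω)]

theorem pr_eq_sum_pr_and {ι : Type*} [Fintype ι] (W : Ω → ι) (s : Ω → Prop) :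
    pr p s = ∑ k, pr p (fun ω => s ω ∧ W ω = k) := by
  unfold pr
  rw [Finset.sum_comm]
  refine Finset.sum_congr rfl fun ω _ => ?_
  by_cases h : s ω <;> simp [h]

variable {A B : Type*} {K M : ℕ} (X1 : Ω → A) (X2 : Ω → B) (W : Ω → Fin K)

-- Conditional independence given `W` gives `P(x, l) = ∑ₖ P(x, k) P(l, k) / P(k)`.
theorem oracle_eq_transpose_mulVec_posterior
    (hCI : ∀ (x : A) (x' : B) (k : Fin K),
      pr p (fun ω => X1 ω = x ∧ X2 ω = x' ∧ W ω = k) * pr p (fun ω => W ω = k) =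
      pr p (fun ω => X1 ω = x ∧ W ω = k) * pr p (fun ω => X2 ω = x' ∧ W ω = k))
    (hW : ∀ k, 0 < pr p (fun ω => W ω = k))
    (l : Fin M → B) (hl : ∀ j, 0 < pr p (fun ω => X2 ω = l j))
    (L : Matrix (Fin K) (Fin M) ℝ)
    (hL : ∀ k j, L k j =
      (pr p (fun ω => X2 ω = l j ∧ W ω = k) / pr p (fun ω => W ω = k)) /
        pr p (fun ω => X2 ω = l j))
    (x : A) (hx : pr p (fun ω => X1 ω = x) ≠ 0) :
    (fun j => pr p (fun ω => X1 ω = x ∧ X2 ω = l j) /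
        (pr p (fun ω => X1 ω = x) * pr p (fun ω => X2 ω = l j))) =
      Lᵀ *ᵥ fun k => pr p (fun ω => X1 ω = x ∧ W ω = k) / pr p (fun ω => X1 ω = x) := by
  funext j
  have hlj : pr p (fun ω => X2 ω = l j) ≠ 0 := (hl j).ne'
  have hjoint : pr p (fun ω => X1 ω = x ∧ X2 ω = l j) =
      ∑ k, pr p (fun ω => X1 ω = x ∧ X2 ω = l j ∧ W ω = k) := by
    rw [pr_eq_sum_pr_and p W]
    exact Finset.sum_congr rfl fun k _ => pr_congr p fun ω => and_assoc
  rw [mulVec, dotProduct, hjoint, Finset.sum_div]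
  refine Finset.sum_congr rfl fun k _ => ?_
  have hWk : pr p (fun ω => W ω = k) ≠ 0 := (hW k).ne'
  rw [(eq_div_iff hWk).mpr (hCI x (l j) k), transpose_apply, hL k j]
  field_simp

end Probability

theorem stmt_5_general {Ω A B : Type*} [Fintype Ω] {K M : ℕ}
    (p : Ω → ℝ)
    (X1 : Ω → A) (X2 : Ω → B) (W : Ω → Fin K)
    (hCI : ∀ (x : A) (x' : B) (k : Fin K),
      pr p (fun ω => X1 ω = x ∧ X2 ω = x' ∧ W ω = k) * pr p (fun ω => W ω = k) =
      pr p (fun ω => X1 ω = x ∧ W ω = k) * pr p (fun ω => X2 ω = x' ∧ W ω = k))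
    (hW : ∀ k, 0 < pr p (fun ω => W ω = k))
    (l : Fin M → B)
    (hl : ∀ j, 0 < pr p (fun ω => X2 ω = l j))
    (L : Matrix (Fin K) (Fin M) ℝ)
    (hL : ∀ k j, L k j =
      (pr p (fun ω => X2 ω = l j ∧ W ω = k) / pr p (fun ω => W ω = k)) /
        pr p (fun ω => X2 ω = l j))
    (hrank : L.rank = K)
    (x : A) (hx : 0 < pr p (fun ω => X1 ω = x)) :
    (pinvT L).mulVec
        (fun j => pr p (fun ω => X1 ω = x ∧ X2 ω = l j) /
          (pr p (fun ω => X1 ω = x) * pr p (fun ω => X2 ω = l j))) =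
      fun k => pr p (fun ω => W ω = k ∧ X1 ω = x) / pr p (fun ω => X1 ω = x) := by
  rw [oracle_eq_transpose_mulVec_posterior p X1 X2 W hCI hW l hl L hL x hx.ne', mulVec_mulVec,
    pinvT_mul_transpose hrank, one_mulVec]
  funext k
  rw [pr_congr p fun ω => and_comm]

/-- Single-topic posterior recovery.  `W ∈ [K]` is the latent topic, the halves `X1, X2` are
conditionally independent given `W`, and the landmark matrix `L` has columns
`ψ(l_j)/P(X2 = l_j)` with `ψ(l)_k = P(X2 = l | W = k)`.  If `L` has rank `K`, then applying
the pseudo-inverse of `Lᵀ` to the oracle representation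
`g*(x, l_{1:M}) = (P(X1=x, X2=l_j)/(P(X1=x)P(X2=l_j)))_j = Lᵀ η(x)` exactly recovers the
posterior `η(x)_k = P(W = k | X1 = x)`. -/
theorem stmt_5 {Ω A B : Type*} [Fintype Ω] [Fintype A] [Fintype B] {K M : ℕ}
    (p : Ω → ℝ) (hp : ∀ ω, 0 ≤ p ω) (hsum : ∑ ω, p ω = 1)
    (X1 : Ω → A) (X2 : Ω → B) (W : Ω → Fin K)
    (hCI : ∀ (x : A) (x' : B) (k : Fin K),
      pr p (fun ω => X1 ω = x ∧ X2 ω = x' ∧ W ω = k) * pr p (fun ω => W ω = k) =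
      pr p (fun ω => X1 ω = x ∧ W ω = k) * pr p (fun ω => X2 ω = x' ∧ W ω = k))
    (hW : ∀ k, 0 < pr p (fun ω => W ω = k))
    (l : Fin M → B)
    (hl : ∀ j, 0 < pr p (fun ω => X2 ω = l j))
    (L : Matrix (Fin K) (Fin M) ℝ)
    (hL : ∀ k j, L k j =
      (pr p (fun ω => X2 ω = l j ∧ W ω = k) / pr p (fun ω => W ω = k)) /
        pr p (fun ω => X2 ω = l j))
    (hrank : L.rank = K)
    (x : A) (hx : 0 < pr p (fun ω => X1 ω = x)) :
    (pinvT L).mulVec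
        (fun j => pr p (fun ω => X1 ω = x ∧ X2 ω = l j) /
          (pr p (fun ω => X1 ω = x) * pr p (fun ω => X2 ω = l j))) =
      fun k => pr p (fun ω => W ω = k ∧ X1 ω = x) / pr p (fun ω => X1 ω = x) :=
  stmt_5_general p X1 X2 W hCI hW l hl L hL hrank x hx
end

section
/- In the single-topic model with anchor words, assume P(W=e_k) ≤ 1 for all k and document length m ≥ 1/a_min. Then the second-moment matrix of normalized likelihood vectors satisfies E[ψ(x)ψ(x)^⊤/P(x)²] ⪰ (1 − 1/e)·I_K in the positive semidefinite order, where ψ(x)_k = P(x⁽²⁾=x | W=e_k) and x is drawn from the marginal μ₂. -/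
open Finset Matrix
open scoped Classical

/-!
Write `ψ(x)_j = ∏ᵢ O(xᵢ | j)` and `P(x) = ∑ⱼ q_j ψ(x)_j`, so the matrix is `∑ₓ ψ(x) ψ(x)ᵀ / P(x)`.
Since `O(a_k | j) = 0` for `j ≠ k`, a document containing the anchor `a_k` has `ψ(x) = ψ(x)_k e_k`
and `P(x) = q_k ψ(x)_k`, so it contributes `ψ(x)_k / q_k · e_k e_kᵀ ⪰ ψ(x)_k · e_k e_kᵀ` (as
`q_k ≤ 1`); a document containing anchors of two different topics has `ψ(x) = 0`.
Hence the quadratic form at `u` is at least `∑_k u_k² P(a_k ∈ x | k)`, and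
`P(a_k ∈ x | k) = 1 - (1 - O(a_k | k))^m ≥ 1 - (1 - a_min)^m ≥ 1 - e^{-a_min m} ≥ 1 - 1/e`.
-/

namespace Matrix

variable {ι X : Type*} [Fintype X]

theorem posSemidef_sub_smul_one_of_le [Fintype ι] [DecidableEq ι] {A : Matrix ι ι ℝ}
    (hA : A.IsHermitian) {c : ℝ} (h : ∀ u, c * ∑ i, u i ^ 2 ≤ u ⬝ᵥ A *ᵥ u) :
    (A - c • 1).PosSemidef := by
  refine PosSemidef.of_dotProduct_mulVec_nonneg (hA.sub (isHermitian_one.smul (.all c))) fun u => ?_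
  have hc : u ⬝ᵥ (c • (1 : Matrix ι ι ℝ)) *ᵥ u = c * ∑ i, u i ^ 2 := by
    rw [smul_mulVec, one_mulVec, dotProduct_smul, smul_eq_mul]
    simp only [dotProduct, sq]
  rw [star_trivial, sub_mulVec, dotProduct_sub, hc, sub_nonneg]
  exact h u

theorem isHermitian_sum_smul_vecMulVec_self (w : X → ℝ) (f : X → ι → ℝ) :
    (∑ x, w x • vecMulVec (f x) (f x)).IsHermitian := by
  ext i j
  simp [sum_apply, vecMulVec_apply, mul_comm]

theorem dotProduct_sum_smul_vecMulVec_self_mulVec [Fintype ι] (w : X → ℝ) (f : X → ι → ℝ)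
    (u : ι → ℝ) :
    u ⬝ᵥ (∑ x, w x • vecMulVec (f x) (f x)) *ᵥ u = ∑ x, w x * (u ⬝ᵥ f x) ^ 2 := by
  simp [sum_mulVec, dotProduct_sum, smul_mulVec, vecMulVec_mulVec, dotProduct_comm, sq]

end Matrix

theorem one_sub_pow_le_exp_neg_one {p : ℝ} {m : ℕ} (hp : p ≤ 1) (hpm : 1 ≤ p * m) :
    (1 - p) ^ m ≤ Real.exp (-1) := by
  have hm : (m : ℝ) ≠ 0 := by rintro h; simp [h] at hpm; linarith
  calc (1 - p) ^ m = (1 - p * m / m) ^ m := by rw [mul_div_cancel_right₀ _ hm]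
    _ ≤ Real.exp (-(p * m)) := Real.one_sub_div_pow_le_exp_neg (by nlinarith [hpm])
    _ ≤ Real.exp (-1) := Real.exp_le_exp.2 (by linarith)

namespace SingleTopic

variable {V ι : Type*} {m : ℕ}

def likelihood (O : V → ι → ℝ) (x : Fin m → V) (j : ι) : ℝ := ∏ i, O (x i) j

def marginal [Fintype ι] (O : V → ι → ℝ) (qw : ι → ℝ) (x : Fin m → V) : ℝ :=
  ∑ j, qw j * likelihood O x j

/-- `E_{x ∼ P}[ψ(x) ψ(x)ᵀ / P(x)²] = ∑ₓ ψ(x) ψ(x)ᵀ / P(x)`; documents with `P(x) = 0` drop out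
because `0⁻¹ = 0`. -/
noncomputable def secondMoment [Fintype V] [Fintype ι] (O : V → ι → ℝ) (qw : ι → ℝ) (m : ℕ) :
    Matrix ι ι ℝ :=
  ∑ x : Fin m → V, (marginal O qw x)⁻¹ • vecMulVec (likelihood O x) (likelihood O x)

variable {O : V → ι → ℝ}

theorem likelihood_nonneg (hO : ∀ v j, 0 ≤ O v j) (x : Fin m → V) (j : ι) :
    0 ≤ likelihood O x j :=
  prod_nonneg fun _ _ => hO _ _

theorem marginal_nonneg [Fintype ι] (hO : ∀ v j, 0 ≤ O v j) {qw : ι → ℝ} (hqw : ∀ j, 0 ≤ qw j)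
    (x : Fin m → V) : 0 ≤ marginal O qw x :=
  sum_nonneg fun j _ => mul_nonneg (hqw j) (likelihood_nonneg hO x j)

theorem likelihood_eq_zero_of_mem {v : V} {j : ι} (hv : O v j = 0) {x : Fin m → V}
    (hx : ∃ i, x i = v) : likelihood O x j = 0 := by
  obtain ⟨i, rfl⟩ := hx
  exact prod_eq_zero (mem_univ i) hv

theorem sum_likelihood [Fintype V] {j : ι} (hOsum : ∑ v, O v j = 1) :
    ∑ x : Fin m → V, likelihood O x j = 1 := by
  rw [← one_pow m, ← hOsum, Fintype.sum_pow]
  rfl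

theorem sum_likelihood_of_mem [Fintype V] {j : ι} (hOsum : ∑ v, O v j = 1) (v : V) :
    ∑ x : Fin m → V, (if ∃ i, x i = v then likelihood O x j else 0) = 1 - (1 - O v j) ^ m := by
  have hcompl : ∑ w, (if w = v then 0 else O w j) = 1 - O v j := by
    rw [← hOsum, sum_ite, sum_const_zero, zero_add, filter_ne', sum_erase_eq_sub (mem_univ v)]
  rw [← hcompl, Fintype.sum_pow, ← sum_likelihood (m := m) hOsum, ← sum_sub_distrib]
  refine sum_congr rfl fun x _ => ?_
  split_ifs with hx
  · obtain ⟨i, hi⟩ := hx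
    have hzero : ∏ i, (if x i = v then (0 : ℝ) else O (x i) j) = 0 :=
      prod_eq_zero (mem_univ i) (if_pos hi)
    rw [hzero, sub_zero]
  · push Not at hx
    rw [prod_congr rfl fun i _ => if_neg (hx i), likelihood, sub_self]

theorem one_sub_inv_exp_le_sum_likelihood_of_mem [Fintype V] (hO : ∀ v j, 0 ≤ O v j) {j : ι}
    (hOsum : ∑ v, O v j = 1) {v : V} {amin : ℝ} (hamin : 0 < amin) (ha : amin ≤ O v j)
    (hm : 1 / amin ≤ m) :
    1 - 1 / Real.exp 1 ≤ ∑ x : Fin m → V, (if ∃ i, x i = v then likelihood O x j else 0) := by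
  have hOle : O v j ≤ 1 := hOsum ▸ single_le_sum (fun w _ => hO w j) (mem_univ v)
  have hm' : 1 ≤ O v j * m := by
    rw [div_le_iff₀ hamin] at hm
    nlinarith
  rw [sum_likelihood_of_mem hOsum, one_div, ← Real.exp_neg]
  linarith [one_sub_pow_le_exp_neg_one hOle hm']

theorem sum_sq_mul_anchor_le [Fintype ι] {qw : ι → ℝ} (hO : ∀ v j, 0 ≤ O v j) (hqw : ∀ j, 0 < qw j)
    (hqwle : ∀ j, qw j ≤ 1) {a : ι → V} (hanchor : ∀ k j, j ≠ k → O (a k) j = 0)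
    (u : ι → ℝ) (x : Fin m → V) :
    ∑ k, u k ^ 2 * (if ∃ i, x i = a k then likelihood O x k else 0) ≤
      (marginal O qw x)⁻¹ * (u ⬝ᵥ likelihood O x) ^ 2 := by
  by_cases hex : ∃ k, (∃ i, x i = a k) ∧ likelihood O x k ≠ 0
  · obtain ⟨k, hk, hψk⟩ := hex
    have hψ : ∀ j ≠ k, likelihood O x j = 0 := fun j hj =>
      likelihood_eq_zero_of_mem (hanchor k j hj) hk
    have hlhs : ∑ j, u j ^ 2 * (if ∃ i, x i = a j then likelihood O x j else 0) =
        u k ^ 2 * likelihood O x k := by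
      rw [sum_eq_single k (fun j _ hj => by simp [hψ j hj]) (by simp), if_pos hk]
    have hP : marginal O qw x = qw k * likelihood O x k :=
      sum_eq_single k (fun j _ hj => by simp [hψ j hj]) (by simp)
    have hdot : u ⬝ᵥ likelihood O x = u k * likelihood O x k :=
      sum_eq_single k (fun j _ hj => by simp [hψ j hj]) (by simp)
    have hpos : 0 < likelihood O x k := (likelihood_nonneg hO x k).lt_of_ne' hψk
    rw [hlhs, hP, hdot]
    calc u k ^ 2 * likelihood O x k ≤ u k ^ 2 * likelihood O x k / qw k :=
          le_div_self (by positivity) (hqw k) (hqwle k)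
      _ = (qw k * likelihood O x k)⁻¹ * (u k * likelihood O x k) ^ 2 := by
          field_simp
  · push Not at hex
    rw [sum_eq_zero fun k _ => ?_]
    · exact mul_nonneg (inv_nonneg.2 (marginal_nonneg hO (fun j => (hqw j).le) x)) (sq_nonneg _)
    · split_ifs with hk
      · rw [hex k hk, mul_zero]
      · rw [mul_zero]

theorem secondMoment_eq_of_sum_ite [Fintype V] [Fintype ι] {qw : ι → ℝ}
    (hP : ∀ x : Fin m → V, 0 ≤ marginal O qw x) :
    secondMoment O qw m = of fun j j' => ∑ x : Fin m → V,
      if 0 < marginal O qw x then likelihood O x j * likelihood O x j' / marginal O qw x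
      else 0 := by
  ext j j'
  simp only [secondMoment, Matrix.sum_apply, Matrix.smul_apply, vecMulVec_apply, of_apply,
    smul_eq_mul]
  refine sum_congr rfl fun x _ => ?_
  split_ifs with hpos
  · rw [inv_mul_eq_div]
  · simp [(not_lt.1 hpos).antisymm (hP x)]

theorem one_sub_inv_exp_mul_sum_sq_le [Fintype V] [Fintype ι] {qw : ι → ℝ}
    (hO : ∀ v j, 0 ≤ O v j) (hOsum : ∀ j, ∑ v, O v j = 1) (hqw : ∀ j, 0 < qw j)
    (hqwle : ∀ j, qw j ≤ 1) {a : ι → V} (hanchor : ∀ k j, j ≠ k → O (a k) j = 0)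
    {amin : ℝ} (hamin : 0 < amin) (ha : ∀ k, amin ≤ O (a k) k) (hm : 1 / amin ≤ m)
    (u : ι → ℝ) :
    (1 - 1 / Real.exp 1) * ∑ k, u k ^ 2 ≤ u ⬝ᵥ secondMoment O qw m *ᵥ u := by
  rw [secondMoment, dotProduct_sum_smul_vecMulVec_self_mulVec]
  calc (1 - 1 / Real.exp 1) * ∑ k, u k ^ 2
      ≤ ∑ k, u k ^ 2 * ∑ x : Fin m → V, (if ∃ i, x i = a k then likelihood O x k else 0) := by
        rw [mul_sum]
        refine sum_le_sum fun k _ => ?_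
        rw [mul_comm]
        exact mul_le_mul_of_nonneg_left
          (one_sub_inv_exp_le_sum_likelihood_of_mem hO (hOsum k) hamin (ha k) hm) (sq_nonneg _)
    _ = ∑ x : Fin m → V, ∑ k, u k ^ 2 * (if ∃ i, x i = a k then likelihood O x k else 0) := by
        simp_rw [mul_sum]
        exact sum_comm
    _ ≤ ∑ x : Fin m → V, (marginal O qw x)⁻¹ * (u ⬝ᵥ likelihood O x) ^ 2 :=
        sum_le_sum fun x _ => sum_sq_mul_anchor_le hO hqw hqwle hanchor u x

theorem posSemidef_secondMoment_sub_smul_one [Fintype V] [Fintype ι] [DecidableEq ι]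
    {qw : ι → ℝ} (hO : ∀ v j, 0 ≤ O v j) (hOsum : ∀ j, ∑ v, O v j = 1) (hqw : ∀ j, 0 < qw j)
    (hqwle : ∀ j, qw j ≤ 1) {a : ι → V} (hanchor : ∀ k j, j ≠ k → O (a k) j = 0)
    {amin : ℝ} (hamin : 0 < amin) (ha : ∀ k, amin ≤ O (a k) k) (hm : 1 / amin ≤ m) :
    (secondMoment O qw m - (1 - 1 / Real.exp 1) • (1 : Matrix ι ι ℝ)).PosSemidef :=
  posSemidef_sub_smul_one_of_le (isHermitian_sum_smul_vecMulVec_self _ _)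
    (one_sub_inv_exp_mul_sum_sq_le hO hOsum hqw hqwle hanchor hamin ha hm)

end SingleTopic

theorem stmt_16_general {V : Type*} [Fintype V] {K m : ℕ} (O : V → Fin K → ℝ)
    (hO : ∀ v j, 0 ≤ O v j) (hOsum : ∀ j, ∑ v, O v j = 1)
    (qw : Fin K → ℝ) (hqw : ∀ j, 0 < qw j) (hqwle : ∀ j, qw j ≤ 1)
    (a : Fin K → V) (hanchor : ∀ k j, 0 < O (a k) j ↔ j = k)
    (amin : ℝ) (hamin : 0 < amin) (ha : ∀ k, amin ≤ O (a k) k)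
    (hm : 1 / amin ≤ (m : ℝ)) :
    Matrix.PosSemidef
      ((Matrix.of fun j j' : Fin K =>
          ∑ x : Fin m → V,
            if 0 < ∑ j'', qw j'' * ∏ i, O (x i) j'' then
              (∏ i, O (x i) j) * (∏ i, O (x i) j') /
                (∑ j'', qw j'' * ∏ i, O (x i) j'')
            else 0) -
        (1 - 1 / Real.exp 1) • (1 : Matrix (Fin K) (Fin K) ℝ)) := by
  have hanchor' : ∀ k j, j ≠ k → O (a k) j = 0 := fun k j hjk =>
    (hO _ _).antisymm' (not_lt.1 fun h => hjk ((hanchor k j).1 h))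
  have h :=
    SingleTopic.posSemidef_secondMoment_sub_smul_one hO hOsum hqw hqwle hanchor' hamin ha hm
  have hP := SingleTopic.marginal_nonneg (m := m) hO fun j => (hqw j).le
  rwa [SingleTopic.secondMoment_eq_of_sum_ite hP] at h

/-- Second-moment lower bound for normalized likelihood vectors in the single-topic model
with anchor words: if each topic `k` has an anchor word with emission probability at least
`a_min` and the document length satisfies `m ≥ 1/a_min`, then
`E_{x∼μ₂}[ψ(x)ψ(x)^⊤ / P(x)²] ⪰ (1 − 1/e)·I_K`, where `ψ(x)_j = P(x | W = e_j)` and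
`P(x) = ∑_j P(W=e_j) ψ(x)_j` is the marginal document probability. -/
theorem stmt_16 {V : Type*} [Fintype V] {K m : ℕ} (O : V → Fin K → ℝ)
    (hO : ∀ v j, 0 ≤ O v j) (hOsum : ∀ j, ∑ v, O v j = 1)
    (qw : Fin K → ℝ) (hqw : ∀ j, 0 < qw j) (hqwle : ∀ j, qw j ≤ 1) (hqwsum : ∑ j, qw j = 1)
    (a : Fin K → V) (hanchor : ∀ k j, 0 < O (a k) j ↔ j = k)
    (amin : ℝ) (hamin : 0 < amin) (ha : ∀ k, amin ≤ O (a k) k)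
    (hm : 1 / amin ≤ (m : ℝ)) :
    Matrix.PosSemidef
      ((Matrix.of fun j j' : Fin K =>
          ∑ x : Fin m → V,
            if 0 < ∑ j'', qw j'' * ∏ i, O (x i) j'' then
              (∏ i, O (x i) j) * (∏ i, O (x i) j') /
                (∑ j'', qw j'' * ∏ i, O (x i) j'')
            else 0) -
        (1 - 1 / Real.exp 1) • (1 : Matrix (Fin K) (Fin K) ℝ)) :=
  stmt_16_general O hO hOsum qw hqw hqwle a hanchor amin hamin ha hm
end

section
/- Error transformation theorem: Suppose (1) with probability 1−δ/2 the landmark matrix L from M ≥ M₀ i.i.d. landmarks has minimum singular value ≥ σ_min√M; (2) f̂ and f* take values in (0, f_max] with f_max ∈ (0,1); and (3) ε_n := E_{(x,x')∼D_c}[(f̂(x,x') − f*(x,x'))²]. Then with probability at least 1−δ over the landmark sample, the risk R(φ̂) = min_v E_{x∼μ₁}[(η(x)^⊤θ* − φ̂(x)^⊤v)²] of the learned representation φ̂(x) = (f̂(x,l_j)/(1−f̂(x,l_j)))_{j≤M} satisfies R(φ̂) ≤ ‖θ*‖₂²/(σ_min²(1−f_max)⁴) · (2ε_n + √(2·log(2/δ)/M)).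 -/
/-!
On the event that the landmark matrix `L` has smallest singular value at least `σ_min √M`, the
minimum-norm solution of `Lv = θ*` has `‖v‖² ≤ ‖θ*‖² / (M σ_min²)`, and since `φ*(x) = Lᵀη(x)`
the target is `φ*(x)ᵀv`; by Cauchy–Schwarz the risk of `φ̂` is at most `‖v‖²` times the mean
squared distance between `φ̂` and `φ*`. The odds map `t ↦ t/(1 - t)` is `(1 - f_max)⁻²`-Lipschitz
on `(0, f_max]`, so that distance is at most `(1 - f_max)⁻⁴ ∑ⱼ W(lⱼ)`, where
`W(b) = E_{x∼μ₁}[(f̂ - f*)(x, b)²] ∈ [0, 1]` has `μ₂`-mean at most `2 ε_n`. Hoeffding's inequality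
over the landmarks bounds the probability that `∑ⱼ W(lⱼ) > M (2 ε_n + √(2 log(2/δ)/M))` by
`δ/2`, and a union bound with the singular-value event concludes.
-/

open Finset Matrix
open scoped Classical

/-- First-half marginal `μ₁` of the joint document distribution `μ`. -/
noncomputable def marg1 {A B : Type*} [Fintype B] (μ : A × B → ℝ) (x : A) : ℝ := ∑ b, μ (x, b)

/-- Second-half marginal `μ₂` of the joint document distribution `μ`. -/
noncomputable def marg2 {A B : Type*} [Fintype A] (μ : A × B → ℝ) (x' : B) : ℝ := ∑ a, μ (a, x')

/-- The Bayes-optimal predictor for the balanced contrastive distribution `D_c`: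
`f*(x,x') = μ(x,x') / (μ(x,x') + μ₁(x)μ₂(x'))`. -/
noncomputable def fstar {A B : Type*} [Fintype A] [Fintype B] (μ : A × B → ℝ)
    (x : A) (x' : B) : ℝ :=
  μ (x, x') / (μ (x, x') + marg1 μ x * marg2 μ x')

/-- The landmark matrix `L` with columns `ψ(l_j)/μ₂(l_j)` for a landmark sample `l`. -/
noncomputable def landmarkMat {A B : Type*} [Fintype A] {N M : ℕ} (μ : A × B → ℝ)
    (ψ : B → Fin N → ℝ) (l : Fin M → B) : Matrix (Fin N) (Fin M) ℝ :=
  Matrix.of fun i j => ψ (l j) i / marg2 μ (l j)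

open MeasureTheory ProbabilityTheory

section IID

variable {B : Type*} [Fintype B] {M : ℕ} {w : B → ℝ}

/-- The probability of the event `S` for an i.i.d. sample `l` of size `M` from the law `w`. -/
noncomputable def iidProb (w : B → ℝ) (S : (Fin M → B) → Prop) [DecidablePred S] : ℝ :=
  ∑ l ∈ univ.filter S, ∏ j, w (l j)

lemma iidProb_le_add_of_imp (hw : ∀ b, 0 ≤ w b) {P Q R : (Fin M → B) → Prop}
    [DecidablePred P] [DecidablePred Q] [DecidablePred R] (h : ∀ l, R l → P l ∨ Q l) :
    iidProb w R ≤ iidProb w P + iidProb w Q := by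
  have hnonneg : ∀ l : Fin M → B, 0 ≤ ∏ j, w (l j) := fun l => prod_nonneg fun j _ => hw (l j)
  calc iidProb w R ≤ ∑ l ∈ univ.filter P ∪ univ.filter Q, ∏ j, w (l j) := by
        refine sum_le_sum_of_subset_of_nonneg (fun l hl => ?_) fun l _ _ => hnonneg l
        simpa only [mem_union, mem_filter, mem_univ, true_and] using h l (mem_filter.1 hl).2
    _ ≤ iidProb w P + iidProb w Q := by
        rw [iidProb, iidProb, ← sum_union_inter]
        exact le_add_of_nonneg_right (sum_nonneg fun l _ => hnonneg l)

lemma iidProb_eq_measureReal_pi [MeasurableSpace B] [MeasurableSingletonClass B] (ν : Measure B)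
    [IsProbabilityMeasure ν] (hν : ∀ b, ν.real {b} = w b) (S : (Fin M → B) → Prop)
    [DecidablePred S] :
    iidProb w S = (Measure.pi fun _ : Fin M => ν).real {l | S l} := by
  have hS : {l | S l} = ((univ.filter S : Finset (Fin M → B)) : Set (Fin M → B)) := by ext; simp
  rw [iidProb, hS, ← sum_measureReal_singleton]
  refine sum_congr rfl fun l _ => ?_
  simp [measureReal_def, ENNReal.toReal_prod, ← hν]

/-- Hoeffding's inequality for an i.i.d. sample of a `[0, 1]`-valued statistic. -/
theorem iidProb_sum_ge_le_exp (hw : ∀ b, 0 ≤ w b) (hw1 : ∑ b, w b = 1) {W : B → ℝ}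
    (hW : ∀ b, W b ∈ Set.Icc (0 : ℝ) 1) {t : ℝ} (ht : 0 ≤ t) :
    iidProb w (fun l : Fin M → B => M * (∑ b, w b * W b + t) ≤ ∑ j, W (l j)) ≤
      Real.exp (-2 * M * t ^ 2) := by
  let _ : MeasurableSpace B := ⊤
  have hw1' : ∑ b, ENNReal.ofReal (w b) = 1 := by
    rw [← ENNReal.ofReal_sum_of_nonneg fun b _ => hw b, hw1, ENNReal.ofReal_one]
  set ν := (PMF.ofFintype _ hw1').toMeasure
  set P := Measure.pi fun _ : Fin M => ν
  have hmean (j : Fin M) : ∫ l, W (l j) ∂P = ∑ b, w b * W b := by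
    rw [integral_comp_eval Measurable.of_discrete.aestronglyMeasurable, PMF.integral_eq_sum]
    simp [hw]
  have hsubG (j : Fin M) (_ : j ∈ univ) :
      HasSubgaussianMGF (fun l => W (l j) - ∑ b, w b * W b) ((‖(1 : ℝ) - 0‖₊ / 2) ^ 2) P := by
    rw [← hmean j]
    exact hasSubgaussianMGF_of_mem_Icc
      (Measurable.of_discrete.comp (measurable_pi_apply j)).aemeasurable
      (ae_of_all _ fun l => hW (l j))
  have hind : iIndepFun (fun (j : Fin M) (l : Fin M → B) => W (l j) - ∑ b, w b * W b) P :=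
    iIndepFun_pi (X := fun _ b => W b - ∑ b, w b * W b) fun _ => Measurable.of_discrete.aemeasurable
  rw [iidProb_eq_measureReal_pi ν (fun b => by simp [ν, measureReal_def, hw b])]
  convert HasSubgaussianMGF.measure_sum_ge_le_of_iIndepFun hind hsubG (ε := M * t) (by positivity)
    using 2
  · ext l
    simp only [Set.mem_ofPred_eq, sum_sub_distrib, sum_const, card_univ, Fintype.card_fin,
      nsmul_eq_mul]
    constructor <;> intro h <;> linarith
  · rcases M.eq_zero_or_pos with rfl | hM
    · simp
    · simp only [neg_mul, sub_zero, nnnorm_one, one_div, inv_pow, sum_const, card_univ,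
        Fintype.card_fin, nsmul_eq_mul, NNReal.coe_mul, NNReal.coe_natCast, NNReal.coe_inv,
        NNReal.coe_pow, NNReal.coe_ofNat]
      field_simp

end IID

section RiskTransfer

variable {X m n : Type*} [Fintype X] [Fintype m] [Fintype n]

lemma dotProduct_mul_mul_transpose_mulVec (L : Matrix m n ℝ) (u : m → ℝ) :
    u ⬝ᵥ ((L * Lᵀ) *ᵥ u) = ∑ j, (Lᵀ *ᵥ u) j ^ 2 := by
  rw [← mulVec_mulVec, dotProduct_mulVec, ← mulVec_transpose]
  simp only [dotProduct, sq]

lemma exists_mulVec_eq_of_le_sum_sq [DecidableEq m] (L : Matrix m n ℝ) (θ : m → ℝ) {c : ℝ}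
    (hc : 0 < c) (hL : ∀ u : m → ℝ, c * ∑ i, u i ^ 2 ≤ ∑ j, (Lᵀ *ᵥ u) j ^ 2) :
    ∃ v : n → ℝ, L *ᵥ v = θ ∧ c * ∑ j, v j ^ 2 ≤ ∑ i, θ i ^ 2 := by
  have hinj : Function.Injective (L * Lᵀ).mulVec := fun u u' h => by
    have hd := hL (u - u')
    rw [← dotProduct_mul_mul_transpose_mulVec, mulVec_sub, h, sub_self, dotProduct_zero] at hd
    have h0 : ∑ i, (u - u') i ^ 2 = 0 :=
      le_antisymm (nonpos_of_mul_nonpos_right hd hc) (sum_nonneg fun i _ => sq_nonneg _)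
    funext i
    simpa [sub_eq_zero] using
      (sum_eq_zero_iff_of_nonneg fun i _ => sq_nonneg _).1 h0 i (mem_univ i)
  obtain ⟨w, hw⟩ := mulVec_surjective_iff_isUnit.2 (mulVec_injective_iff_isUnit.1 hinj) θ
  refine ⟨Lᵀ *ᵥ w, by rw [mulVec_mulVec, hw], ?_⟩
  -- `‖Lᵀw‖² = ⟨w, θ⟩`, so Cauchy–Schwarz and `c ‖w‖² ≤ ‖Lᵀw‖²` give `c ‖Lᵀw‖⁴ ≤ ‖Lᵀw‖² ‖θ‖²`
  have hCS : (∑ j, (Lᵀ *ᵥ w) j ^ 2) ^ 2 ≤ (∑ i, w i ^ 2) * ∑ i, θ i ^ 2 := by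
    rw [← dotProduct_mul_mul_transpose_mulVec, hw]
    exact sum_mul_sq_le_sq_mul_sq univ w θ
  rcases (sum_nonneg fun j (_ : j ∈ univ) => sq_nonneg ((Lᵀ *ᵥ w) j)).eq_or_lt with h0 | hpos
  · rw [← h0, mul_zero]
    exact sum_nonneg fun i _ => sq_nonneg _
  · nlinarith [hL w, sum_nonneg fun i (_ : i ∈ univ) => sq_nonneg (θ i)]

/-- The target `η(x)ᵀθ` equals `φ*(x)ᵀv` for `φ* = Lᵀη` whenever `Lv = θ`, so the risk of `φ` is
controlled by its distance to `φ*` and by `‖v‖`. -/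
lemma exists_risk_le [DecidableEq m] (p : X → ℝ) (hp : ∀ x, 0 ≤ p x) (η : X → m → ℝ)
    (φ : X → n → ℝ) (L : Matrix m n ℝ) (θ : m → ℝ) {c : ℝ} (hc : 0 < c)
    (hL : ∀ u : m → ℝ, c * ∑ i, u i ^ 2 ≤ ∑ j, (Lᵀ *ᵥ u) j ^ 2) :
    ∃ v : n → ℝ, ∑ x, p x * (∑ i, η x i * θ i - ∑ j, φ x j * v j) ^ 2 ≤
      (∑ i, θ i ^ 2) / c * ∑ x, p x * ∑ j, ((η x ᵥ* L) j - φ x j) ^ 2 := by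
  obtain ⟨v, hLv, hv⟩ := exists_mulVec_eq_of_le_sum_sq L θ hc hL
  refine ⟨v, ?_⟩
  rw [mul_sum]
  refine sum_le_sum fun x _ => ?_
  have hx : ∑ i, η x i * θ i - ∑ j, φ x j * v j = ∑ j, ((η x ᵥ* L) j - φ x j) * v j := by
    simp only [sub_mul, sum_sub_distrib]
    rw [← hLv]
    exact congrArg (· - _) (dotProduct_mulVec (η x) L v)
  rw [hx, mul_left_comm]
  refine mul_le_mul_of_nonneg_left ?_ (hp x)
  calc (∑ j, ((η x ᵥ* L) j - φ x j) * v j) ^ 2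
      ≤ (∑ j, ((η x ᵥ* L) j - φ x j) ^ 2) * ∑ j, v j ^ 2 := sum_mul_sq_le_sq_mul_sq _ _ _
    _ ≤ (∑ j, ((η x ᵥ* L) j - φ x j) ^ 2) * ((∑ i, θ i ^ 2) / c) := by
      gcongr
      rwa [le_div_iff₀' hc]
    _ = _ := mul_comm _ _

end RiskTransfer

lemma sq_div_one_sub_sub_div_one_sub_le {a b f : ℝ} (ha : a ≤ f) (hb : b ≤ f) (hf : f < 1) :
    (a / (1 - a) - b / (1 - b)) ^ 2 ≤ (a - b) ^ 2 / (1 - f) ^ 4 := by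
  have ha' : 0 < 1 - a := by linarith
  have hb' : 0 < 1 - b := by linarith
  have hkey : a / (1 - a) - b / (1 - b) = (a - b) / ((1 - a) * (1 - b)) := by
    field_simp
    ring
  rw [hkey, div_pow]
  gcongr
  calc (1 - f) ^ 4 = ((1 - f) * (1 - f)) ^ 2 := by ring
    _ ≤ ((1 - a) * (1 - b)) ^ 2 := by gcongr

section Contrastive

variable {A B : Type*} [Fintype A] [Fintype B] {μ : A × B → ℝ}

lemma sum_marg1 : ∑ x, marg1 μ x = ∑ z, μ z := by
  rw [Fintype.sum_prod_type]
  rfl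

lemma sum_marg2 : ∑ b, marg2 μ b = ∑ z, μ z := by
  rw [Fintype.sum_prod_type]
  exact sum_comm

lemma fstar_div_one_sub_fstar {x : A} {b : B} (hμ : 0 ≤ μ (x, b))
    (h : 0 < marg1 μ x * marg2 μ b) :
    fstar μ x b / (1 - fstar μ x b) = μ (x, b) / (marg1 μ x * marg2 μ b) := by
  have hD : μ (x, b) + marg1 μ x * marg2 μ b ≠ 0 := by positivity
  rw [fstar, one_sub_div hD, add_sub_cancel_left, div_div_div_cancel_right₀ hD]

/-- `Lᵀη(x)` is the vector `φ*(x)` of odds ratios `g* = f*/(1 - f*)` at the landmarks. -/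
lemma vecMul_landmarkMat {N M : ℕ} (hμ : ∀ z, 0 ≤ μ z) (hm1 : ∀ x, 0 < marg1 μ x)
    (hm2 : ∀ b, 0 < marg2 μ b) (η : A → Fin N → ℝ) (ψ : B → Fin N → ℝ)
    (hrep : ∀ x x', μ (x, x') / (marg1 μ x * marg2 μ x') = (∑ i, η x i * ψ x' i) / marg2 μ x')
    (l : Fin M → B) (x : A) (j : Fin M) :
    (η x ᵥ* landmarkMat μ ψ l) j = fstar μ x (l j) / (1 - fstar μ x (l j)) := by
  rw [fstar_div_one_sub_fstar (hμ _) (mul_pos (hm1 x) (hm2 (l j))), hrep, sum_div]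
  simp only [vecMul, dotProduct, landmarkMat, of_apply, mul_div_assoc]

lemma sum_marg1_mul_sq_sub_mem_Icc (hμsum : ∑ z, μ z = 1) (hm1 : ∀ x, 0 < marg1 μ x)
    {f g : A → ℝ} (hf : ∀ x, f x ∈ Set.Ioc 0 1) (hg : ∀ x, g x ∈ Set.Ioc 0 1) :
    ∑ x, marg1 μ x * (f x - g x) ^ 2 ∈ Set.Icc (0 : ℝ) 1 := by
  refine ⟨sum_nonneg fun x _ => mul_nonneg (hm1 x).le (sq_nonneg _), ?_⟩
  calc ∑ x, marg1 μ x * (f x - g x) ^ 2 ≤ ∑ x, marg1 μ x * 1 := by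
        refine sum_le_sum fun x _ => mul_le_mul_of_nonneg_left ?_ (hm1 x).le
        obtain ⟨⟨hf0, hf1⟩, ⟨hg0, hg1⟩⟩ := And.intro (hf x) (hg x)
        rw [sq_le_one_iff_abs_le_one, abs_le]
        constructor <;> linarith
    _ = 1 := by simp only [mul_one, sum_marg1, hμsum]

/-- An error measured under `μ₁ ⊗ μ₂` is at most twice the same error under the balanced
contrastive distribution `D_c = (μ + μ₁ ⊗ μ₂)/2`. -/
lemma sum_marg2_mul_sum_marg1_mul_le (hμ : ∀ z, 0 ≤ μ z) (d : A → B → ℝ)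
    (hd : ∀ x b, 0 ≤ d x b) :
    ∑ b, marg2 μ b * ∑ x, marg1 μ x * d x b ≤
      2 * ∑ x, ∑ x', (μ (x, x') / 2 + marg1 μ x * marg2 μ x' / 2) * d x x' := by
  simp only [mul_sum]
  rw [sum_comm]
  refine sum_le_sum fun x _ => sum_le_sum fun b _ => ?_
  nlinarith [mul_nonneg (hμ (x, b)) (hd x b)]

lemma exists_risk_le_of_good_sample {N M : ℕ} (hM : 0 < M) (hμ : ∀ z, 0 ≤ μ z)
    (hm1 : ∀ x, 0 < marg1 μ x) (hm2 : ∀ b, 0 < marg2 μ b)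
    (fhat : A → B → ℝ) {fmax : ℝ} (hfmax : fmax < 1) (hfhat : ∀ x b, fhat x b ≤ fmax)
    (hfstar : ∀ x b, fstar μ x b ≤ fmax) (η : A → Fin N → ℝ) (ψ : B → Fin N → ℝ)
    (hrep : ∀ x x', μ (x, x') / (marg1 μ x * marg2 μ x') = (∑ i, η x i * ψ x' i) / marg2 μ x')
    (θ : Fin N → ℝ) {σmin : ℝ} (hσ : 0 < σmin) (l : Fin M → B) {r : ℝ}
    (hL : ∀ u : Fin N → ℝ,
      (M : ℝ) * σmin ^ 2 * ∑ i, u i ^ 2 ≤ ∑ j, ((landmarkMat μ ψ l)ᵀ *ᵥ u) j ^ 2)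
    (herr : ∑ j, ∑ x, marg1 μ x * (fhat x (l j) - fstar μ x (l j)) ^ 2 ≤ M * r) :
    ∃ v : Fin M → ℝ, ∑ x, marg1 μ x *
        (∑ i, η x i * θ i - ∑ j, (fhat x (l j) / (1 - fhat x (l j))) * v j) ^ 2 ≤
      (∑ i, θ i ^ 2) / (σmin ^ 2 * (1 - fmax) ^ 4) * r := by
  have hf : 0 < 1 - fmax := by linarith
  obtain ⟨v, hv⟩ := exists_risk_le (marg1 μ) (fun x => (hm1 x).le) η
    (fun x j => fhat x (l j) / (1 - fhat x (l j))) (landmarkMat μ ψ l) θ (by positivity) hL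
  refine ⟨v, hv.trans ?_⟩
  simp only [vecMul_landmarkMat hμ hm1 hm2 η ψ hrep]
  have hodds : ∑ x, marg1 μ x * ∑ j, (fstar μ x (l j) / (1 - fstar μ x (l j)) -
      fhat x (l j) / (1 - fhat x (l j))) ^ 2 ≤ M * r / (1 - fmax) ^ 4 := calc
    _ ≤ ∑ x, marg1 μ x * ∑ j, (fhat x (l j) - fstar μ x (l j)) ^ 2 / (1 - fmax) ^ 4 := by
      gcongr with x _ j
      · exact (hm1 x).le
      · rw [sub_sq_comm (fhat _ _)]
        exact sq_div_one_sub_sub_div_one_sub_le (hfstar _ _) (hfhat _ _) hfmax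
    _ = (∑ j, ∑ x, marg1 μ x * (fhat x (l j) - fstar μ x (l j)) ^ 2) / (1 - fmax) ^ 4 := by
      simp only [← sum_div, mul_sum, mul_div_assoc']
      rw [sum_comm]
    _ ≤ M * r / (1 - fmax) ^ 4 := by gcongr
  calc _ ≤ (∑ i, θ i ^ 2) / (M * σmin ^ 2) * (M * r / (1 - fmax) ^ 4) := by gcongr
    _ = (∑ i, θ i ^ 2) / (σmin ^ 2 * (1 - fmax) ^ 4) * r := by
      have : (M : ℝ) ≠ 0 := by positivity
      field_simp

end Contrastive

/-- Error transformation theorem (Theorem 5.4).  Suppose (1) with probability at least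
`1 − δ/2` over `M` i.i.d. landmarks `l ∼ μ₂^⊗M` the landmark matrix has minimum singular
value at least `σ_min √M`; (2) `f̂` and `f*` take values in `(0, f_max]`; and (3)
`ε_n = E_{D_c}[(f̂ − f*)²]`.  Then with probability at least `1 − δ` over the landmark
sample, the risk of the learned representation `φ̂(x)_j = f̂(x,l_j)/(1 − f̂(x,l_j))` on the
target `η(x)^⊤θ*` satisfies
`R(φ̂) ≤ ‖θ*‖² / (σ_min² (1−f_max)⁴) · (2 ε_n + √(2 log(2/δ)/M))`. -/
theorem stmt_19 {A B : Type*} [Fintype A] [Fintype B] {N M : ℕ} (hM : 0 < M)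
    (μ : A × B → ℝ) (hμ : ∀ z, 0 ≤ μ z) (hμsum : ∑ z, μ z = 1)
    (hm1 : ∀ x, 0 < marg1 μ x) (hm2 : ∀ b, 0 < marg2 μ b)
    (fhat : A → B → ℝ) (fmax : ℝ) (hfmax : fmax ∈ Set.Ioo (0 : ℝ) 1)
    (hfhat : ∀ x b, fhat x b ∈ Set.Ioc (0 : ℝ) fmax)
    (hfstar : ∀ x b, fstar μ x b ∈ Set.Ioc (0 : ℝ) fmax)
    -- posterior feature map `η` and likelihood features `ψ` with `g* = ⟨η, ψ⟩/μ₂` (Lemma 4.2)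
    (η : A → Fin N → ℝ) (ψ : B → Fin N → ℝ)
    (hrep : ∀ x x', μ (x, x') / (marg1 μ x * marg2 μ x') =
      (∑ i, η x i * ψ x' i) / marg2 μ x')
    (θ : Fin N → ℝ) (δ : ℝ) (hδ : δ ∈ Set.Ioo (0 : ℝ) 1)
    (σmin : ℝ) (hσ : 0 < σmin)
    -- (1): the minimum-singular-value event fails with probability at most δ/2
    (h1 : ∑ l ∈ (univ : Finset (Fin M → B)).filter (fun l =>
        ¬ ∀ u : Fin N → ℝ, (M : ℝ) * σmin ^ 2 * ∑ i, u i ^ 2 ≤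
            ∑ j, ((landmarkMat μ ψ l)ᵀ.mulVec u) j ^ 2),
      ∏ j, marg2 μ (l j) ≤ δ / 2)
    -- (3): the contrastive mean squared error of `f̂`
    (εn : ℝ)
    (hεn : εn = ∑ x : A, ∑ x' : B,
      (μ (x, x') / 2 + marg1 μ x * marg2 μ x' / 2) * (fhat x x' - fstar μ x x') ^ 2) :
    ∑ l ∈ (univ : Finset (Fin M → B)).filter (fun l =>
        ¬ ∃ v : Fin M → ℝ,
          ∑ x, marg1 μ x *
              (∑ i, η x i * θ i -
                ∑ j, (fhat x (l j) / (1 - fhat x (l j))) * v j) ^ 2 ≤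
            (∑ i, θ i ^ 2) / (σmin ^ 2 * (1 - fmax) ^ 4) *
              (2 * εn + Real.sqrt (2 * Real.log (2 / δ) / M))),
      ∏ j, marg2 μ (l j) ≤ δ := by
  obtain ⟨hδ0, hδ1⟩ := hδ
  set s := Real.sqrt (2 * Real.log (2 / δ) / M)
  set W : B → ℝ := fun b => ∑ x, marg1 μ x * (fhat x b - fstar μ x b) ^ 2
  have hW (b : B) : W b ∈ Set.Icc (0 : ℝ) 1 :=
    have hle {y : ℝ} (hy : y ∈ Set.Ioc 0 fmax) : y ∈ Set.Ioc 0 1 := ⟨hy.1, hy.2.trans hfmax.2.le⟩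
    sum_marg1_mul_sq_sub_mem_Icc hμsum hm1 (fun x => hle (hfhat x b)) (fun x => hle (hfstar x b))
  have hmean : ∑ b, marg2 μ b * W b ≤ 2 * εn :=
    hεn ▸ sum_marg2_mul_sum_marg1_mul_le hμ _ fun x b => sq_nonneg _
  have hlog : 0 < Real.log (2 / δ) := Real.log_pos (by rw [lt_div_iff₀ hδ0]; linarith)
  have hexp : Real.exp (-2 * M * s ^ 2) ≤ δ / 2 := by
    rw [Real.sq_sqrt (by positivity)]
    calc _ ≤ Real.exp (-Real.log (2 / δ)) := Real.exp_le_exp.2 (by field_simp; linarith)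
      _ = δ / 2 := by rw [Real.exp_neg, Real.exp_log (by positivity), inv_div]
  have hdev := (iidProb_sum_ge_le_exp (M := M) (fun b => (hm2 b).le)
    (by rw [sum_marg2, hμsum]) hW (Real.sqrt_nonneg _)).trans hexp
  change iidProb (M := M) (marg2 μ) _ ≤ δ / 2 at h1
  refine (iidProb_le_add_of_imp (fun b => (hm2 b).le) fun l hl => ?_).trans
    ((add_le_add h1 hdev).trans_eq (add_halves δ))
  by_contra! hgood
  exact hl (exists_risk_le_of_good_sample hM hμ hm1 hm2 fhat hfmax.2 (fun x b => (hfhat x b).2)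
    (fun x b => (hfstar x b).2) η ψ hrep θ hσ l hgood.1 (by nlinarith [hgood.2]))
end
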